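/- Let G = Σ1 × ⋯ × Σr (r ≥ 2) with generators a_i^(k), b_i^(k) as above, and define c_i = a_i^(1)(b_i^(1))^{-1}, d = [b_1^(1), b_2^(1)], f_i^(k) = a_i^(1)(a_i^(k))^{-1}, g_i^(k) = b_i^(1)(b_i^(k))^{-1}. Then for all i, j ∈ {1,2} and k ∈ {2,…,r}: [(a_i^(1))^ε, g_j^(k)] equals [(f_i^(k))^ε, c_i^{-1}] if i = j; equals f_i^(k) c_j^{-1} (f_i^(k))^{-1} d^{2i-3} c_j if i ≠ j and ε = 1; and equals (f_i^(k))^{-1} c_j^{-1} d^{3-2i} f_i^(k) c_j if i ≠ j and ε = -1. -/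

import Mathlib

open FreeGroup
open scoped commutatorElement

def surfRels : Set (FreeGroup (Fin 4)) :=
  {⁅FreeGroup.of (0 : Fin 4), FreeGroup.of (1 : Fin 4)⁆ * ⁅FreeGroup.of (2 : Fin 4), FreeGroup.of (3 : Fin 4)⁆}

/-- The genus-2 surface group. -/
abbrev Surf := PresentedGroup surfRels

def a (i : Fin 2) : Surf := PresentedGroup.of ⟨i.val, by omega⟩
def b (i : Fin 2) : Surf := PresentedGroup.of ⟨i.val + 2, by omega⟩

abbrev M := Multiplicative (ℤ × ℤ)

def φgen : Fin 4 → M :=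
  fun n => Multiplicative.ofAdd (if n.val = 0 ∨ n.val = 2 then ((1 : ℤ), (0 : ℤ)) else ((0 : ℤ), (1 : ℤ)))

lemma φrels : ∀ r ∈ surfRels, FreeGroup.lift φgen r = 1 := by
  rintro r hr
  simp only [surfRels, Set.mem_singleton_iff] at hr
  subst hr
  have h1 : (FreeGroup.lift φgen) (⁅FreeGroup.of (0 : Fin 4), FreeGroup.of (1 : Fin 4)⁆ * ⁅FreeGroup.of (2 : Fin 4), FreeGroup.of (3 : Fin 4)⁆) = ⁅φgen 0, φgen 1⁆ * ⁅φgen 2, φgen 3⁆ := by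
    simp [commutatorElement_def]
  rw [h1, commutatorElement_eq_one_iff_mul_comm.mpr (mul_comm _ _),
    commutatorElement_eq_one_iff_mul_comm.mpr (mul_comm _ _), one_mul]

/-- The homomorphism Σ → ℤ² sending aᵢ, bᵢ to the i-th standard basis vector. -/
def φ1 : Surf →* M := PresentedGroup.toGroup φrels

/-- The direct product of r genus-2 surface groups. -/
abbrev GG (r : ℕ) := ∀ _ : Fin r, Surf

def A (r : ℕ) (i : Fin 2) (k : Fin r) : GG r := Pi.mulSingle k (a i)
def B (r : ℕ) (i : Fin 2) (k : Fin r) : GG r := Pi.mulSingle k (b i)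

/-- The homomorphism G = Σ₁ × ⋯ × Σr → ℤ² sending all aᵢ, bᵢ to eᵢ. -/
def Φ (r : ℕ) : GG r →* M := ∏ k : Fin r, φ1.comp (Pi.evalMonoidHom (fun _ => Surf) k)

/-! In the product, everything built from factor `1` is trivial off that factor, and the
factor-`k` parts of `fᵢ⁽ᵏ⁾, gⱼ⁽ᵏ⁾` commute with factor `1` and cancel. So the identity reduces
to one in a single surface group, where it is a free-group identity once the relation is used
in the form `[a₁, a₂] = d⁻¹`: e.g. `[x, y] = x (z y⁻¹)⁻¹ x⁻¹ [x, z] (z y⁻¹)`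
holds in every group. -/

theorem Pi.commutatorElement_apply {ι : Type*} {G : ι → Type*} [∀ i, Group (G i)]
    (x y : ∀ i, G i) (i : ι) : ⁅x, y⁆ i = ⁅x i, y i⁆ :=
  rfl

section GroupIdentities

variable {G : Type*} [Group G]

theorem commutatorElement_zpow_mul_inv_self (x y : G) (n : ℤ) :
    ⁅x ^ n, y * x⁻¹⁆ = ⁅x ^ n, y⁆ := by
  simp only [commutatorElement_def]
  group

theorem commutatorElement_eq_of_commutatorElement_eq {x y z e : G} (h : ⁅x, z⁆ = e) :
    ⁅x, y⁆ = x * (z * y⁻¹)⁻¹ * x⁻¹ * e * (z * y⁻¹) := by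
  rw [← h, commutatorElement_def, commutatorElement_def]
  group

theorem commutatorElement_inv_left_eq_of_commutatorElement_eq {x y z e : G} (h : ⁅z, x⁆ = e) :
    ⁅x⁻¹, y⁆ = x⁻¹ * (z * y⁻¹)⁻¹ * e * x * (z * y⁻¹) := by
  rw [← h, commutatorElement_def, commutatorElement_def]
  group

end GroupIdentities

theorem commutatorElement_a_a_mul_commutatorElement_b_b : ⁅a 0, a 1⁆ * ⁅b 0, b 1⁆ = 1 := by
  have h : PresentedGroup.mk surfRels
      (⁅FreeGroup.of (0 : Fin 4), FreeGroup.of 1⁆ * ⁅FreeGroup.of (2 : Fin 4), FreeGroup.of 3⁆) = 1 :=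
    (QuotientGroup.eq_one_iff _).mpr (Subgroup.subset_normalClosure rfl)
  simpa [commutatorElement_def, a, b, PresentedGroup.of] using h

theorem commutatorElement_a_of_ne {i j : Fin 2} (hij : i ≠ j) :
    ⁅a i, a j⁆ = if i = 0 then ⁅b 0, b 1⁆⁻¹ else ⁅b 0, b 1⁆ := by
  have h01 : ⁅a 0, a 1⁆ = ⁅b 0, b 1⁆⁻¹ :=
    eq_inv_of_mul_eq_one_left commutatorElement_a_a_mul_commutatorElement_b_b
  fin_cases i <;> fin_cases j
  all_goals simp only [ne_eq, not_true_eq_false] at hij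
  · exact h01
  · rw [← commutatorElement_inv]
    simp [h01]

theorem commutatorElement_a_zpow_b (i j : Fin 2) (ε : ℤ) (hε : ε = 1 ∨ ε = -1) :
    letI c : Fin 2 → Surf := fun i' => a i' * (b i')⁻¹
    letI d : Surf := ⁅b 0, b 1⁆
    ⁅a i ^ ε, b j⁆ =
      if i = j then ⁅a i ^ ε, (c i)⁻¹⁆
      else if ε = 1 then a i * (c j)⁻¹ * (a i)⁻¹ * (if i = 0 then d⁻¹ else d) * c j
      else (a i)⁻¹ * (c j)⁻¹ * (if i = 0 then d else d⁻¹) * a i * c j := by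
  dsimp only
  by_cases hij : i = j
  · subst hij
    rw [if_pos rfl, mul_inv_rev, inv_inv, commutatorElement_zpow_mul_inv_self]
  rw [if_neg hij]
  rcases hε with rfl | rfl
  · rw [if_pos rfl, zpow_one]
    exact commutatorElement_eq_of_commutatorElement_eq (commutatorElement_a_of_ne hij)
  · rw [if_neg (by decide), zpow_neg_one]
    refine commutatorElement_inv_left_eq_of_commutatorElement_eq ?_
    rw [← commutatorElement_inv, commutatorElement_a_of_ne hij, apply_ite Inv.inv, inv_inv]

/-- Values of the commutators `[(aᵢ⁽¹⁾)^ε, gⱼ⁽ᵏ⁾]` in `G = Σ₁ × ⋯ × Σr`, where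
`cᵢ = aᵢ⁽¹⁾(bᵢ⁽¹⁾)⁻¹`, `d = [b₁⁽¹⁾, b₂⁽¹⁾]`, `fᵢ⁽ᵏ⁾ = aᵢ⁽¹⁾(aᵢ⁽ᵏ⁾)⁻¹`,
`gᵢ⁽ᵏ⁾ = bᵢ⁽¹⁾(bᵢ⁽ᵏ⁾)⁻¹`. -/
theorem stmt8 (r : ℕ) (hr : 2 ≤ r) (i j : Fin 2) (k : Fin r) (hk : k ≠ ⟨0, by omega⟩)
    (ε : ℤ) (hε : ε = 1 ∨ ε = -1) :
    (letI o : Fin r := ⟨0, by omega⟩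
     letI c : Fin 2 → GG r := fun i' => A r i' o * (B r i' o)⁻¹
     letI d : GG r := ⁅B r 0 o, B r 1 o⁆
     letI f : Fin 2 → GG r := fun i' => A r i' o * (A r i' k)⁻¹
     letI g : Fin 2 → GG r := fun i' => B r i' o * (B r i' k)⁻¹
     ⁅(A r i o) ^ ε, g j⁆ =
       if i = j then ⁅(f i) ^ ε, (c i)⁻¹⁆
       else if ε = 1 then f i * (c j)⁻¹ * (f i)⁻¹ * (if i = 0 then d⁻¹ else d) * c j
       else (f i)⁻¹ * (c j)⁻¹ * (if i = 0 then d else d⁻¹) * f i * c j) := by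
  dsimp only
  funext l
  simp only [ite_apply, Pi.commutatorElement_apply, Pi.mul_apply, Pi.inv_apply, Pi.pow_apply, A, B]
  rcases eq_or_ne l ⟨0, by omega⟩ with rfl | hl
  · simp only [Pi.mulSingle_eq_same, Pi.mulSingle_eq_of_ne' hk, inv_one, mul_one]
    exact commutatorElement_a_zpow_b i j ε hε
  · simp [Pi.mulSingle_eq_of_ne hl]
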